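/- arXiv:2403.16223 — 3 statements merged into one kernel-verified Lean document; each statement's English description precedes it below -/
import Mathlib

section
/- If (α₁,…,α_N) is a generalized Nash equilibrium of the unnormalized game (each αᵢ minimizes ∑_a ℓᵢ(a) ∏ⱼ αⱼ(a) over nonnegative αᵢ subject to ∑_a ∏ⱼ αⱼ(a) = 1), and every αᵢ is strictly positive, then for each player i the cost ℓᵢ is constant on the joint action space: ℓᵢ(aᵢ, a₋ᵢ) = ℓᵢ(âᵢ, a₋ᵢ) for all aᵢ, âᵢ, a₋ᵢ. -/
/-!
Fix a player `i` and put `w a = α i a * ∏_{j ≠ i} α j a`, so that `∑ w = 1` and `w > 0`.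
Deviating to the point mass at `x` rescaled to be feasible shows that the equilibrium cost
`c = ∑ ℓ i · w` is at most `ℓ i x` for every joint action `x`. A function that never drops below
its mean with respect to strictly positive weights is constant, equal to that mean.
-/

open Finset

theorem eq_sum_mul_of_sum_mul_le {ι : Type*} [Fintype ι] (f w : ι → ℝ) (hw : ∀ x, 0 < w x)
    (hsum : ∑ x, w x = 1) (hle : ∀ x, ∑ y, f y * w y ≤ f x) (x : ι) :
    f x = ∑ y, f y * w y := by
  set c := ∑ y, f y * w y
  have hdev : ∑ y, (f y - c) * w y = 0 := by
    simp only [sub_mul, sum_sub_distrib, ← mul_sum, hsum, mul_one]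
    exact sub_self c
  have hzero := (sum_eq_zero_iff_of_nonneg fun y _ ↦
    mul_nonneg (sub_nonneg.2 (hle y)) (hw y).le).1 hdev x (mem_univ x)
  linarith [(mul_eq_zero.1 hzero).resolve_right (hw x).ne']

theorem le_apply_of_forall_le_sum_mul {ι : Type*} [Fintype ι] [DecidableEq ι] (ℓ β : ι → ℝ)
    (c : ℝ) (h : ∀ α' : ι → ℝ, (∀ a, 0 ≤ α' a) → ∑ a, α' a * β a = 1 →
      c ≤ ∑ a, ℓ a * (α' a * β a))
    (x : ι) (hx : 0 < β x) : c ≤ ℓ x := by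
  have hinv : (β x)⁻¹ * β x = 1 := inv_mul_cancel₀ hx.ne'
  have hnonneg : (0 : ι → ℝ) ≤ Pi.single x (β x)⁻¹ := Pi.single_nonneg.2 (inv_pos.2 hx).le
  have hpoint := h (Pi.single x (β x)⁻¹) hnonneg (by simp [Pi.single_apply, hinv])
  simpa [Pi.single_apply, hinv] using hpoint

/-- If `(α₁,…,α_N)` is a strictly positive generalized Nash equilibrium of the
unnormalized game, then each player's cost is constant in its own action. -/
theorem gne_positive_implies_cost_constant {N : ℕ} {A : Fin N → Type*}
    [∀ i, Fintype (A i)]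
    (ℓ : ∀ _ : Fin N, (∀ j, A j) → ℝ)
    (α : ∀ _ : Fin N, (∀ j, A j) → ℝ)
    (hpos : ∀ i a, 0 < α i a)
    (hfeas : ∑ a, ∏ j, α j a = 1)
    (hgne : ∀ i, ∀ α' : (∀ j, A j) → ℝ, (∀ a, 0 ≤ α' a) →
        (∑ a, α' a * ∏ j ∈ Finset.univ.erase i, α j a = 1) →
        ∑ a, ℓ i a * (α i a * ∏ j ∈ Finset.univ.erase i, α j a)
          ≤ ∑ a, ℓ i a * (α' a * ∏ j ∈ Finset.univ.erase i, α j a)) :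
    ∀ i (a : ∀ j, A j) (b : A i), ℓ i a = ℓ i (Function.update a i b) := by
  classical
  intro i a b
  set β : (∀ j, A j) → ℝ := fun x ↦ ∏ j ∈ univ.erase i, α j x
  have hβ : ∀ x, 0 < β x := fun x ↦ prod_pos fun j _ ↦ hpos j x
  have hw : ∀ x, α i x * β x = ∏ j, α j x := fun x ↦
    mul_prod_erase univ (fun j ↦ α j x) (mem_univ i)
  have hconst := eq_sum_mul_of_sum_mul_le (ℓ i) (fun x ↦ α i x * β x)
    (fun x ↦ mul_pos (hpos i x) (hβ x)) (by simpa only [hw] using hfeas)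
    (fun x ↦ le_apply_of_forall_le_sum_mul (ℓ i) β _ (hgne i) x (hβ x))
  rw [hconst a, hconst (Function.update a i b)]
end

section
/- The closed-form measures αᵢ(a) = exp(−λᵢ ℓᵢ(a)) / Z^{λᵢ/Λ} with Z = ∑_a exp(−∑ⱼ λⱼℓⱼ(a)), Λ = ∑ⱼ λⱼ, satisfy the stationarity equation of the entropy-regularized unnormalized game: for every player i and joint action a, ℓᵢ(a) + (1/λᵢ) log αᵢ(a) + σ = 0, where σ = (1/Λ) log Z is a common Lagrange multiplier. -/
open Real

theorem log_exp_div_rpow (x : ℝ) {Z : ℝ} (hZ : 0 < Z) (p : ℝ) :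
    log (exp x / Z ^ p) = x - p * log Z := by
  rw [log_div (exp_ne_zero x) (rpow_pos_of_pos hZ p).ne', log_exp, log_rpow hZ]

theorem gibbs_weight_stationarity {l lam Λ Z : ℝ} (hlam : lam ≠ 0) (hZ : 0 < Z) :
    l + 1 / lam * log (exp (-(lam * l)) / Z ^ (lam / Λ)) + 1 / Λ * log Z = 0 := by
  rw [log_exp_div_rpow _ hZ]
  field_simp
  ring

theorem entropy_measures_stationarity_general {A : Type*} [Fintype A]
    {N : ℕ}
    (ℓ : Fin N → A → ℝ) (lam : Fin N → ℝ) (hlam : ∀ i, 0 < lam i) :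
    let Z : ℝ := ∑ a, Real.exp (-∑ j, lam j * ℓ j a)
    let Λ : ℝ := ∑ j, lam j
    let α : Fin N → A → ℝ := fun i a =>
      Real.exp (-(lam i * ℓ i a)) / Z ^ (lam i / Λ)
    let σ : ℝ := (1 / Λ) * Real.log Z
    ∀ i a, ℓ i a + (1 / lam i) * Real.log (α i a) + σ = 0 := by
  intro Z Λ α σ i a
  have hZ : 0 < Z := Finset.sum_pos (fun b _ => exp_pos _) ⟨a, Finset.mem_univ a⟩
  exact gibbs_weight_stationarity (hlam i).ne' hZ

/-- The closed-form entropy-regularized measures satisfy the stationarity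
equation with the common multiplier `σ = (1/Λ) log Z`. -/
theorem entropy_measures_stationarity {A : Type*} [Fintype A]
    [Nonempty A] {N : ℕ} (hN : 0 < N)
    (ℓ : Fin N → A → ℝ) (lam : Fin N → ℝ) (hlam : ∀ i, 0 < lam i) :
    let Z : ℝ := ∑ a, Real.exp (-∑ j, lam j * ℓ j a)
    let Λ : ℝ := ∑ j, lam j
    let α : Fin N → A → ℝ := fun i a =>
      Real.exp (-(lam i * ℓ i a)) / Z ^ (lam i / Λ)
    let σ : ℝ := (1 / Λ) * Real.log Z
    ∀ i a, ℓ i a + (1 / lam i) * Real.log (α i a) + σ = 0 :=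
  entropy_measures_stationarity_general ℓ lam hlam
end

section
/- Suppose strictly positive measures αᵢ : [A] → ℝ>0 satisfy for each player i: ℓᵢ(a) + (1/λᵢ) log αᵢ(a) + σᵢ = 0 for all a ∈ [A] (for some constants σᵢ), and let y = α₁ ∘ ⋯ ∘ α_N be a probability distribution. Then for every player i and actions aᵢ, âᵢ ∈ [Aᵢ]: ∑_{a₋ᵢ} y(aᵢ, a₋ᵢ)(ℓᵢ(aᵢ,a₋ᵢ) − ℓᵢ(âᵢ,a₋ᵢ)) ≤ εᵢ/λᵢ, where εᵢ = max_{a,â ∈ [A]} log(αᵢ(a)/αᵢ(â)). That is, y is an ε-correlated equilibrium with ε = maxᵢ εᵢ/λᵢ. -/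
/-!
The stationarity equations give `ℓᵢ(aᵢ, a₋ᵢ) - ℓᵢ(âᵢ, a₋ᵢ) = log(αᵢ(âᵢ, a₋ᵢ)/αᵢ(aᵢ, a₋ᵢ))/λᵢ ≤ εᵢ/λᵢ`
pointwise, and `εᵢ ≥ 0` (take `a = â`). The weights `y(aᵢ, ·)` are nonnegative and sum to at
most `∑ₐ y(a) = 1`, since `a₋ᵢ ↦ (aᵢ, a₋ᵢ)` is injective, so the weighted sum is at most `εᵢ/λᵢ`.
-/

/-- Combine player `i`'s action `b` with the opponents' action profile `c`
into a joint action. -/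
def combine {N : ℕ} {A : Fin N → Type*} (i : Fin N) (b : A i)
    (c : ∀ j : {j : Fin N // j ≠ i}, A j.1) : ∀ j, A j :=
  fun j => if h : j = i then cast (congrArg A h).symm b else c ⟨j, h⟩

open Finset Real

section Combine

variable {N : ℕ} {A : Fin N → Type*}

theorem combine_injective (i : Fin N) (b : A i) : Function.Injective (combine i b) := by
  intro c c' h
  funext j
  simpa [combine, j.2] using congrFun h j.1

theorem sum_combine_le_sum [∀ i, Fintype (A i)] (i : Fin N) (b : A i)
    {f : (∀ j, A j) → ℝ} (hf : ∀ a, 0 ≤ f a) :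
    ∑ c : ∀ j : {j : Fin N // j ≠ i}, A j.1, f (combine i b c) ≤ ∑ a, f a := by
  classical
  rw [← sum_image fun _ _ _ _ h => combine_injective i b h]
  exact sum_le_sum_of_subset_of_nonneg (subset_univ _) fun a _ _ => hf a

end Combine

section LogRatio

variable {X : Type*} [Fintype X] [Nonempty X] {f : X → ℝ}

theorem log_div_le_sup'_log_div (a b : X) :
    log (f a / f b) ≤ univ.sup' univ_nonempty (fun p : X × X => log (f p.1 / f p.2)) :=
  le_sup' (fun p : X × X => log (f p.1 / f p.2)) (mem_univ (a, b))

theorem sup'_log_div_nonneg (hf : ∀ a, f a ≠ 0) :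
    0 ≤ univ.sup' univ_nonempty (fun p : X × X => log (f p.1 / f p.2)) := by
  obtain ⟨a⟩ := ‹Nonempty X›
  simpa [div_self (hf a)] using log_div_le_sup'_log_div (f := f) a a

end LogRatio

theorem sub_eq_log_div_div_of_stationary {X : Type*} {ℓ α : X → ℝ} {lam σ : ℝ}
    (hpos : ∀ a, 0 < α a) (hstat : ∀ a, ℓ a + (1 / lam) * log (α a) + σ = 0) (a b : X) :
    ℓ a - ℓ b = log (α b / α a) / lam := by
  have ha := hstat a
  have hb := hstat b
  rw [one_div_mul_eq_div] at ha hb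
  rw [log_div (hpos b).ne' (hpos a).ne', sub_div]
  linarith

theorem sum_mul_le_of_sum_le_one {ι : Type*} {s : Finset ι} {w g : ι → ℝ} {M : ℝ}
    (hw : ∀ i ∈ s, 0 ≤ w i) (hw1 : ∑ i ∈ s, w i ≤ 1) (hM : 0 ≤ M) (hg : ∀ i ∈ s, g i ≤ M) :
    ∑ i ∈ s, w i * g i ≤ M :=
  calc ∑ i ∈ s, w i * g i ≤ ∑ i ∈ s, w i * M :=
        sum_le_sum fun i hi => mul_le_mul_of_nonneg_left (hg i hi) (hw i hi)
    _ = (∑ i ∈ s, w i) * M := (sum_mul _ _ _).symm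
    _ ≤ 1 * M := mul_le_mul_of_nonneg_right hw1 hM
    _ = M := one_mul M

/-- Strictly positive measures satisfying the stationarity equations whose
product is a probability distribution form an ε-correlated equilibrium, with
`εᵢ = max_{a,â} log(αᵢ(a)/αᵢ(â))`. -/
theorem stationary_measures_eps_correlated {N : ℕ} {A : Fin N → Type*}
    [∀ i, Fintype (A i)] [∀ i, Nonempty (A i)]
    (ℓ : ∀ _ : Fin N, (∀ j, A j) → ℝ)
    (α : ∀ _ : Fin N, (∀ j, A j) → ℝ)
    (lam : Fin N → ℝ) (hlam : ∀ i, 0 < lam i)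
    (hpos : ∀ i a, 0 < α i a)
    (σ : Fin N → ℝ)
    (hstat : ∀ i a, ℓ i a + (1 / lam i) * Real.log (α i a) + σ i = 0)
    (hy1 : ∑ a, ∏ i, α i a = 1) :
    ∀ i, ∀ ai ahat : A i,
      ∑ c : ∀ j : {j : Fin N // j ≠ i}, A j.1,
          (∏ j, α j (combine i ai c)) *
            (ℓ i (combine i ai c) - ℓ i (combine i ahat c))
        ≤ (Finset.univ.sup' Finset.univ_nonempty
            (fun p : (∀ j, A j) × (∀ j, A j) =>
              Real.log (α i p.1 / α i p.2))) / lam i := by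
  intro i ai ahat
  have hy_nonneg : ∀ a, 0 ≤ ∏ j, α j a := fun a => prod_nonneg fun j _ => (hpos j a).le
  refine sum_mul_le_of_sum_le_one (fun c _ => hy_nonneg _)
    (hy1 ▸ sum_combine_le_sum i ai hy_nonneg)
    (div_nonneg (sup'_log_div_nonneg fun a => (hpos i a).ne') (hlam i).le) fun c _ => ?_
  rw [sub_eq_log_div_div_of_stationary (hpos i) (hstat i)]
  exact div_le_div_of_nonneg_right (log_div_le_sup'_log_div _ _) (hlam i).le
end
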